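/- Let r ≥ 0, let D ∈ D_n be a Dyck word, and let D' = Ψ_r(D). Then the number of tunnels of D with midpoint in x > n+r (i.e., decompositions D = AuBdC with B a Dyck word and length(A) > length(C) + 2r) equals the number of even rises of D' in x > 2r (i.e., u-steps of D' at even positions i with i > 2r). -/

import Mathlib

/-!
A tunnel is a matched pair `(i, j)` of steps, and its midpoint lies beyond `n + r` exactly when
`2n + 2r < i + j + 1`. Such a tunnel is determined by its down-step `j`, which sits in the part of
the word that `σ^{(r)}` reads from the right, at the odd time `2k + 1` with `k = 2n - 1 - j + r`.
Before that time `σ^{(r)}` has read precisely the positions `≤ r + k` and `≥ 2n + r - k`, so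
`Ψ_r` writes `u` at time `2k + 1` iff step `j` is a `d` whose matching `u` lies beyond `r + k`,
i.e. iff the tunnel is one of those counted. Matching is handled through the height profile:
`i` and `j` are matched iff the path stays strictly above `height i` on `(i, j]` and returns to
it at `j + 1`.
-/

attribute [local instance] Classical.propDecidable

namespace DyckBij

/-- A word over `Bool` (`true` = up-step `u`, `false` = down-step `d`) is a Dyck word:
equally many `u`'s and `d`'s, and every prefix has at least as many `u`'s as `d`'s. -/
def IsDyck (w : List Bool) : Prop :=
  w.count false = w.count true ∧
    ∀ p : List Bool, p <+: w → p.count false ≤ p.count true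

/-- `Matched w i j`: the `u` at (0-indexed) position `i` of `w` is matched (as in matched
parentheses) with the `d` at position `j`, i.e. `w = A u B d C` with `B` a Dyck word,
`|A| = i` and `j = i + |B| + 1`. -/
def Matched (w : List Bool) (i j : ℕ) : Prop :=
  ∃ A B C : List Bool, IsDyck B ∧ w = A ++ true :: (B ++ false :: C) ∧
    A.length = i ∧ j = i + B.length + 1

/-- Positions `i` and `j` form a matched pair of steps of `w`. -/
def MatchPair (w : List Bool) (i j : ℕ) : Prop :=
  Matched w i j ∨ Matched w j i

/-- The 0-indexed reading order `σ^{(r)}` on a word of length `L`: the first `2r` positions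
are read in order, and the remaining positions are read in zigzag
`2r, L-1, 2r+1, L-2, …` (0-indexed). For `r = 0` this is the zigzag order `σ`. -/
def zigR (r L p : ℕ) : ℕ :=
  if p < 2 * r then p
  else if p % 2 = 0 then p / 2 + r
  else L + r - (p + 1) / 2

/-- The bijection `Ψ_r`: the `p`-th letter of `Ψ_r(w)` is `u` iff the match of the
`σ^{(r)}_p`-th step of `w` does not occur among the previously read steps
`σ^{(r)}_0, …, σ^{(r)}_{p-1}`. -/
noncomputable def psiR (r : ℕ) (w : List Bool) : List Bool :=
  List.ofFn fun p : Fin w.length =>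
    if ∃ p' : ℕ, p' < (p : ℕ) ∧
        MatchPair w (zigR r w.length p') (zigR r w.length (p : ℕ))
    then false else true

/-- The bijection `Ψ = Ψ_0`. -/
noncomputable def psi : List Bool → List Bool := psiR 0

/-- Number of tunnels of `w` with `|A| = |C| + 2r` (midpoint at `x = n + r`),
i.e. decompositions `w = A u B d C` with `B` a Dyck word; tunnels are indexed by `|A|`. -/
noncomputable def tunEq (r : ℕ) (w : List Bool) : ℕ :=
  {i : ℕ | ∃ A B C : List Bool, IsDyck B ∧ w = A ++ true :: (B ++ false :: C) ∧
    A.length = i ∧ A.length = C.length + 2 * r}.ncard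

/-- Number of tunnels of `w` with `|A| > |C| + 2r` (midpoint in `x > n + r`). -/
noncomputable def tunGt (r : ℕ) (w : List Bool) : ℕ :=
  {i : ℕ | ∃ A B C : List Bool, IsDyck B ∧ w = A ++ true :: (B ++ false :: C) ∧
    A.length = i ∧ C.length + 2 * r < A.length}.ncard

/-- Number of tunnels of `w` with `|A| ≤ |C| + 2r` (midpoint in `x ≤ n + r`). -/
noncomputable def tunLe (r : ℕ) (w : List Bool) : ℕ :=
  {i : ℕ | ∃ A B C : List Bool, IsDyck B ∧ w = A ++ true :: (B ++ false :: C) ∧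
    A.length = i ∧ A.length ≤ C.length + 2 * r}.ncard

/-- Number of centered tunnels `ct(w)`. -/
noncomputable def ctun (w : List Bool) : ℕ := tunEq 0 w

/-- Number of right tunnels `rt(w)`. -/
noncomputable def rtun (w : List Bool) : ℕ := tunGt 0 w

/-- Number of left tunnels `lt(w)`: tunnels with `|A| < |C|`. -/
noncomputable def ltun (w : List Bool) : ℕ :=
  {i : ℕ | ∃ A B C : List Bool, IsDyck B ∧ w = A ++ true :: (B ++ false :: C) ∧
    A.length = i ∧ A.length < C.length}.ncard

/-- Number of multitunnels of `w` with `|A| = |C| + 2r` (midpoint at `x = n + r`):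
decompositions `w = A B C` with `B` a nonempty Dyck word, indexed by `(|A|, |B|)`. -/
noncomputable def mtunEq (r : ℕ) (w : List Bool) : ℕ :=
  {q : ℕ × ℕ | ∃ A B C : List Bool, IsDyck B ∧ B ≠ [] ∧ w = A ++ B ++ C ∧
    A.length = q.1 ∧ B.length = q.2 ∧ A.length = C.length + 2 * r}.ncard

/-- Number of centered multitunnels `cmt(w)`. -/
noncomputable def cmtun (w : List Bool) : ℕ := mtunEq 0 w

/-- Number of hills `h(w)`: decompositions `w = X u d Y` with `X, Y` Dyck words. -/
noncomputable def numHills (w : List Bool) : ℕ :=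
  {i : ℕ | ∃ X Y : List Bool, IsDyck X ∧ IsDyck Y ∧
    w = X ++ true :: false :: Y ∧ X.length = i}.ncard

/-- Number of hills of `w` lying in `x > 2r`, i.e. with `|X| ≥ 2r`. -/
noncomputable def numHillsAfter (r : ℕ) (w : List Bool) : ℕ :=
  {i : ℕ | ∃ X Y : List Bool, IsDyck X ∧ IsDyck Y ∧
    w = X ++ true :: false :: Y ∧ X.length = i ∧ 2 * r ≤ X.length}.ncard

/-- Number of arches (equivalently, returns) `ret(w)`: decompositions
`w = X (u B d) Y` with `X, B, Y` Dyck words. -/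
noncomputable def numArches (w : List Bool) : ℕ :=
  {i : ℕ | ∃ X B Y : List Bool, IsDyck X ∧ IsDyck B ∧ IsDyck Y ∧
    w = X ++ true :: (B ++ false :: Y) ∧ X.length = i}.ncard

/-- Number of arches of `w` lying in `x ≥ 2r`, i.e. with `|X| ≥ 2r`. -/
noncomputable def numArchesAfter (r : ℕ) (w : List Bool) : ℕ :=
  {i : ℕ | ∃ X B Y : List Bool, IsDyck X ∧ IsDyck B ∧ IsDyck Y ∧
    w = X ++ true :: (B ++ false :: Y) ∧ X.length = i ∧ 2 * r ≤ X.length}.ncard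

/-- Number of odd rises `odr(w)`: `u`-steps at odd 1-indexed positions
(even 0-indexed positions). -/
noncomputable def oddRises (w : List Bool) : ℕ :=
  {p : ℕ | p < w.length ∧ p % 2 = 0 ∧ w.getD p false = true}.ncard

/-- Number of even rises `er(w)`: `u`-steps at even 1-indexed positions
(odd 0-indexed positions). -/
noncomputable def evenRises (w : List Bool) : ℕ :=
  {p : ℕ | p < w.length ∧ p % 2 = 1 ∧ w.getD p false = true}.ncard

/-- Number of odd rises of `w` at 1-indexed positions `> 2r`. -/
noncomputable def oddRisesAfter (r : ℕ) (w : List Bool) : ℕ :=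
  {p : ℕ | p < w.length ∧ p % 2 = 0 ∧ 2 * r ≤ p ∧ w.getD p false = true}.ncard

/-- Number of even rises of `w` at 1-indexed positions `> 2r`. -/
noncomputable def evenRisesAfter (r : ℕ) (w : List Bool) : ℕ :=
  {p : ℕ | p < w.length ∧ p % 2 = 1 ∧ 2 * r ≤ p ∧ w.getD p false = true}.ncard

/-- Number of `u`-steps of `w` at 1-indexed positions `≤ 2r`. -/
noncomputable def upstepsBefore (r : ℕ) (w : List Bool) : ℕ :=
  {p : ℕ | p < w.length ∧ p < 2 * r ∧ w.getD p false = true}.ncard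

/-- Number of peaks of `w`: occurrences of the factor `u d`. -/
noncomputable def numPeaks (w : List Bool) : ℕ :=
  {i : ℕ | i + 2 ≤ w.length ∧ w.getD i false = true ∧ w.getD (i + 1) true = false}.ncard

/-- Number of occurrences in `w` of a factor of length 3 beginning with `u`
and ending with `d` (occurrences of `u⋆d`). -/
noncomputable def numUStarD (w : List Bool) : ℕ :=
  {i : ℕ | i + 3 ≤ w.length ∧ w.getD i false = true ∧ w.getD (i + 2) true = false}.ncard

/-- `ih(w)`: 1 if `w` begins with the factor `u d`, else 0. -/
noncomputable def initHill (w : List Bool) : ℕ :=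
  if w.take 2 = [true, false] then 1 else 0

/-- `fh(w)`: 1 if `w = X u d` with `X` a Dyck word, else 0. -/
noncomputable def finHill (w : List Bool) : ℕ :=
  if ∃ X : List Bool, IsDyck X ∧ w = X ++ [true, false] then 1 else 0

/-- `π` avoids the pattern 321. -/
def Avoids321 {n : ℕ} (π : Equiv.Perm (Fin n)) : Prop :=
  ¬ ∃ i j k : Fin n, i < j ∧ j < k ∧ π k < π j ∧ π j < π i

/-- `π` avoids the pattern 132. -/
def Avoids132 {n : ℕ} (π : Equiv.Perm (Fin n)) : Prop :=
  ¬ ∃ i j k : Fin n, i < j ∧ j < k ∧ π i < π k ∧ π k < π j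

/-- Number of fixed points of `π`. -/
noncomputable def fixedPts {n : ℕ} (π : Equiv.Perm (Fin n)) : ℕ :=
  {i : Fin n | π i = i}.ncard

/-- Number of excedances of `π`. -/
noncomputable def excedances {n : ℕ} (π : Equiv.Perm (Fin n)) : ℕ :=
  {i : Fin n | i < π i}.ncard

/-- Number of descents of `π`. -/
noncomputable def descents {n : ℕ} (π : Equiv.Perm (Fin n)) : ℕ :=
  {i : ℕ | ∃ (h1 : i < n) (h2 : i + 1 < n), π ⟨i + 1, h2⟩ < π ⟨i, h1⟩}.ncard

/-- `α_r(π) = #{i : π(i) = i + r}` (stated 0-indexed, equivalent to the 1-indexed version). -/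
noncomputable def alphaStat {n : ℕ} (r : ℕ) (π : Equiv.Perm (Fin n)) : ℕ :=
  {i : Fin n | (π i : ℕ) = (i : ℕ) + r}.ncard

/-- `β_r(π) = #{i : i > r, π(i) = i}` (for 1-indexed `i`; 0-indexed this is `r ≤ i`). -/
noncomputable def betaStat {n : ℕ} (r : ℕ) (π : Equiv.Perm (Fin n)) : ℕ :=
  {i : Fin n | r ≤ (i : ℕ) ∧ π i = i}.ncard

def height (w : List Bool) (m : ℕ) : ℤ :=
  ((w.take m).count true : ℤ) - (w.take m).count false

@[simp]
lemma height_zero (w : List Bool) : height w 0 = 0 := by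
  simp [height]

lemma height_succ {w : List Bool} {m : ℕ} (hm : m < w.length) :
    height w (m + 1) = height w m + if w.getD m false then 1 else -1 := by
  rw [List.getD_eq_getElem _ _ hm]
  simp only [height, List.take_add_one, List.getElem?_eq_getElem hm, Option.toList_some,
    List.count_append]
  cases w[m] <;> simp <;> ring

lemma height_append_of_le {u v : List Bool} {t : ℕ} (ht : t ≤ u.length) :
    height (u ++ v) t = height u t := by
  simp only [height, List.take_append_of_le_length ht]

lemma height_append_length_add (u v : List Bool) (t : ℕ) :
    height (u ++ v) (u.length + t) = height u u.length + height v t := by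
  simp only [height, List.take_length_add_append, List.take_length, List.count_append]
  push_cast
  ring

lemma isDyck_iff_height {w : List Bool} :
    IsDyck w ↔ height w w.length = 0 ∧ ∀ t ≤ w.length, 0 ≤ height w t := by
  simp only [IsDyck, height, List.take_length, sub_eq_zero, sub_nonneg]
  refine and_congr (by rw [eq_comm]; exact_mod_cast Iff.rfl) ⟨fun h t _ => ?_, fun h p hp => ?_⟩
  · exact_mod_cast h _ (List.take_prefix t w)
  · rw [List.prefix_iff_eq_take.mp hp]
    exact_mod_cast h _ hp.length_le

lemma IsDyck.height_nonneg {w : List Bool} (hw : IsDyck w) (t : ℕ) : 0 ≤ height w t := by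
  rcases le_total t w.length with ht | ht
  · exact (isDyck_iff_height.mp hw).2 t ht
  · simp only [height, List.take_of_length_le ht]
    exact sub_nonneg.mpr (by exact_mod_cast hw.2 w List.prefix_rfl)

lemma IsDyck.height_length {w : List Bool} (hw : IsDyck w) : height w w.length = 0 :=
  (isDyck_iff_height.mp hw).1

lemma height_tunnel {A B C : List Bool} {t : ℕ} (ht : t ≤ B.length) :
    height (A ++ true :: (B ++ false :: C)) (A.length + 1 + t) =
      height (A ++ true :: (B ++ false :: C)) A.length + 1 + height B t := by
  have hA := height_append_length_add A (true :: (B ++ false :: C)) 0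
  have hB := height_append_length_add [true] (B ++ false :: C) t
  rw [add_zero, height_zero, add_zero] at hA
  rw [add_assoc, height_append_length_add, hA, add_assoc]
  simp only [List.length_singleton, List.singleton_append] at hB
  rw [hB, height_append_of_le ht]
  simp [height]

lemma exists_eq_append_cons_append_cons {w : List Bool} {i j : ℕ} (hij : i < j)
    (hj : j < w.length) : ∃ A B C : List Bool,
      w = A ++ w.getD i false :: (B ++ w.getD j false :: C) ∧
        A.length = i ∧ B.length = j - i - 1 := by
  refine ⟨w.take i, (w.drop (i + 1)).take (j - i - 1), w.drop (j + 1), ?_, by simp; omega,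
    by simp; omega⟩
  have hdrop : (w.drop (i + 1)).drop (j - i - 1) = w.drop j := by
    rw [List.drop_drop]; congr 1; omega
  rw [List.getD_eq_getElem _ _ (by omega), List.getD_eq_getElem _ _ hj,
    ← List.drop_eq_getElem_cons hj, ← hdrop, List.take_append_drop,
    ← List.drop_eq_getElem_cons (by omega), List.take_append_drop]

lemma getD_eq_true_of_height_lt {w : List Bool} {m : ℕ} (hm : m < w.length)
    (h : height w m < height w (m + 1)) : w.getD m false = true := by
  rw [height_succ hm] at h
  split_ifs at h with hu
  · exact hu
  · linarith

lemma getD_eq_false_of_height_lt {w : List Bool} {m : ℕ} (hm : m < w.length)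
    (h : height w (m + 1) < height w m) : w.getD m false = false := by
  rw [height_succ hm] at h
  split_ifs at h with hu
  · linarith
  · simpa using hu

lemma matched_iff_height {w : List Bool} {i j : ℕ} :
    Matched w i j ↔ i < j ∧ j < w.length ∧ height w (j + 1) = height w i ∧
      ∀ s, i < s → s ≤ j → height w i < height w s := by
  constructor
  · rintro ⟨A, B, C, hB, rfl, rfl, rfl⟩
    have hd : (A ++ true :: (B ++ false :: C)).getD (A.length + B.length + 1) false = false := by
      simp [List.getD_eq_getElem?_getD, Nat.add_assoc]
    refine ⟨by omega, by simp; omega, ?_, fun s hs hsj => ?_⟩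
    · rw [height_succ (by simp; omega), hd, add_right_comm, height_tunnel le_rfl,
        hB.height_length]
      simp
    · obtain ⟨t, rfl⟩ : ∃ t, s = A.length + 1 + t := ⟨s - A.length - 1, by omega⟩
      rw [height_tunnel (by omega)]
      linarith [hB.height_nonneg t]
  · rintro ⟨hij, hj, hend, hmin⟩
    have hu := getD_eq_true_of_height_lt (by omega) (hmin (i + 1) (by omega) (by omega))
    have hd := getD_eq_false_of_height_lt hj (hend ▸ hmin j hij le_rfl)
    obtain ⟨A, B, C, hw, rfl, hB⟩ := exists_eq_append_cons_append_cons hij hj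
    rw [hu, hd] at hw
    subst hw
    have hBheight : ∀ t ≤ B.length, height B t =
        height (A ++ true :: (B ++ false :: C)) (A.length + 1 + t) -
          height (A ++ true :: (B ++ false :: C)) A.length - 1 := fun t ht => by
      rw [height_tunnel ht]
      ring
    refine ⟨A, B, C, isDyck_iff_height.mpr ⟨?_, fun t ht => ?_⟩, rfl, rfl, by omega⟩
    · have h := height_succ hj
      rw [hd, hend] at h
      rw [hBheight _ le_rfl, show A.length + 1 + B.length = j by omega]
      simp only [Bool.false_eq_true, if_false] at h
      linarith
    · rw [hBheight t ht]
      linarith [hmin (A.length + 1 + t) (by omega) (by omega)]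

namespace Matched

variable {w : List Bool} {i j : ℕ}

lemma lt (h : Matched w i j) : i < j :=
  (matched_iff_height.mp h).1

lemma lt_length (h : Matched w i j) : j < w.length :=
  (matched_iff_height.mp h).2.1

lemma getD_left (h : Matched w i j) : w.getD i false = true := by
  obtain ⟨A, B, C, -, rfl, rfl, -⟩ := h
  simp [List.getD_eq_getElem?_getD]

lemma getD_right (h : Matched w i j) : w.getD j false = false := by
  obtain ⟨A, B, C, -, rfl, rfl, rfl⟩ := h
  simp [List.getD_eq_getElem?_getD, Nat.add_assoc]

lemma right_unique {j' : ℕ} (h : Matched w i j) (h' : Matched w i j') : j = j' := by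
  obtain ⟨hij, -, hend, hmin⟩ := matched_iff_height.mp h
  obtain ⟨hij', -, hend', hmin'⟩ := matched_iff_height.mp h'
  by_contra hne
  rcases Nat.lt_or_gt_of_ne hne with hlt | hlt
  · exact (hmin' (j + 1) (by omega) hlt).ne' hend
  · exact (hmin (j' + 1) (by omega) hlt).ne' hend'

lemma left_unique {i' : ℕ} (h : Matched w i j) (h' : Matched w i' j) : i = i' := by
  obtain ⟨hij, -, hend, hmin⟩ := matched_iff_height.mp h
  obtain ⟨hij', -, hend', hmin'⟩ := matched_iff_height.mp h'
  by_contra hne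
  rcases Nat.lt_or_gt_of_ne hne with hlt | hlt
  · exact (hmin i' hlt hij'.le).ne (hend.symm.trans hend')
  · exact (hmin' i hlt hij.le).ne (hend'.symm.trans hend)

end Matched

namespace IsDyck

variable {w : List Bool}

-- The match of an up-step at `i` closes just before the first return to the level `height w i`.
lemma exists_matched_right (hw : IsDyck w) {i : ℕ} (hi : i < w.length)
    (hu : w.getD i false = true) : ∃ j, Matched w i j := by
  have hret : ∃ m, i < m ∧ height w m ≤ height w i :=
    ⟨w.length, hi, hw.height_length ▸ hw.height_nonneg i⟩
  obtain ⟨him, hm⟩ := Nat.find_spec hret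
  have hmlen : Nat.find hret ≤ w.length :=
    Nat.find_min' hret ⟨hi, hw.height_length ▸ hw.height_nonneg i⟩
  have habove : ∀ s, i < s → s < Nat.find hret → height w i < height w s := fun s his hs => by
    by_contra! hle
    exact Nat.find_min hret hs ⟨his, hle⟩
  have hup := height_succ hi
  rw [hu, if_pos rfl] at hup
  have hgt : i + 1 < Nat.find hret := by
    by_contra! hle
    have : Nat.find hret = i + 1 := by omega
    rw [this] at hm
    linarith
  have hlast := height_succ (w := w) (m := Nat.find hret - 1) (by omega)
  have hprev := habove (Nat.find hret - 1) (by omega) (by omega)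
  rw [Nat.sub_add_cancel (by omega)] at hlast
  refine ⟨Nat.find hret - 1, matched_iff_height.mpr
    ⟨by omega, by omega, ?_, fun s his hs => habove s his (by omega)⟩⟩
  rw [Nat.sub_add_cancel (by omega)]
  split_ifs at hlast <;> linarith

-- The match of a down-step at `j` opens at the last visit before `j` to the level it descends to.
lemma exists_matched_left (hw : IsDyck w) {j : ℕ} (hj : j < w.length)
    (hd : w.getD j false = false) : ∃ i, Matched w i j := by
  obtain ⟨i, hi⟩ : ∃ i, i = Nat.findGreatest (fun s => height w s ≤ height w (j + 1)) j :=
    ⟨_, rfl⟩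
  have hi_le : height w i ≤ height w (j + 1) :=
    hi ▸ Nat.findGreatest_spec (P := fun s => height w s ≤ height w (j + 1)) (Nat.zero_le j)
      (by simpa using hw.height_nonneg (j + 1))
  have habove : ∀ s, i < s → s ≤ j → height w (j + 1) < height w s := fun s his hs => by
    simpa using Nat.findGreatest_is_greatest (P := fun s => height w s ≤ height w (j + 1))
      (hi ▸ his) hs
  have hdown := height_succ hj
  rw [hd] at hdown
  simp only [Bool.false_eq_true, if_false] at hdown
  have hij : i < j := by
    rcases (hi ▸ Nat.findGreatest_le j : i ≤ j).lt_or_eq with h | h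
    · exact h
    · rw [h] at hi_le
      linarith
  have hup := height_succ (w := w) (m := i) (by omega)
  have hnext := habove (i + 1) (by omega) (by omega)
  refine ⟨i, matched_iff_height.mpr ⟨hij, hj, ?_, fun s his hs => ?_⟩⟩
  · split_ifs at hup <;> linarith
  · split_ifs at hup <;> linarith [habove s his hs]

end IsDyck

lemma exists_zigR_eq_iff {r k L x : ℕ} (hrk : r ≤ k) :
    (∃ p < 2 * k + 1, zigR r L p = x) ↔ x ≤ r + k ∨ L + r - k ≤ x ∧ x < L := by
  constructor
  · rintro ⟨p, hp, rfl⟩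
    simp only [zigR]
    split_ifs <;> omega
  · rintro (hx | ⟨hx, hxL⟩)
    · by_cases hx2r : x < 2 * r
      · exact ⟨x, by omega, by simp [zigR, hx2r]⟩
      · exact ⟨2 * (x - r), by omega, by simp only [zigR]; split_ifs <;> omega⟩
    · exact ⟨2 * (L - x + r) - 1, by omega, by simp only [zigR]; split_ifs <;> omega⟩

lemma zigR_odd {r k L : ℕ} (hrk : r ≤ k) : zigR r L (2 * k + 1) = L + r - (k + 1) := by
  simp only [zigR]
  split_ifs <;> omega

@[simp]
lemma length_psiR (r : ℕ) (w : List Bool) : (psiR r w).length = w.length :=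
  List.length_ofFn

lemma psiR_getD_eq_true_iff {r p : ℕ} {w : List Bool} (hp : p < w.length) :
    (psiR r w).getD p false = true ↔
      ¬∃ p' < p, MatchPair w (zigR r w.length p') (zigR r w.length p) := by
  rw [psiR, List.getD_eq_getElem _ _ (by simpa using hp), List.getElem_ofFn]
  split_ifs with h <;> simp [h]

lemma psiR_getD_odd_eq_true_iff {r k : ℕ} {w : List Bool} (hw : IsDyck w) (hrk : r ≤ k)
    (hk : 2 * k + 1 < w.length) :
    (psiR r w).getD (2 * k + 1) false = true ↔
      ∃ i, Matched w i (w.length + r - (k + 1)) ∧ r + k < i := by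
  rw [psiR_getD_eq_true_iff hk, zigR_odd hrk]
  set j := w.length + r - (k + 1) with hj
  have hread : (∃ p < 2 * k + 1, MatchPair w (zigR r w.length p) j) ↔
      ∃ x, (x ≤ r + k ∨ w.length + r - k ≤ x ∧ x < w.length) ∧ MatchPair w x j := by
    simp only [← exists_zigR_eq_iff hrk]
    constructor
    · rintro ⟨p, hp, hm⟩
      exact ⟨_, ⟨p, hp, rfl⟩, hm⟩
    · rintro ⟨_, ⟨p, hp, rfl⟩, hm⟩
      exact ⟨p, hp, hm⟩
  rw [hread]
  constructor
  · intro hunread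
    have hd : w.getD j false = false := by
      cases hu : w.getD j false
      · rfl
      · obtain ⟨m, hm⟩ := hw.exists_matched_right (by omega) hu
        exact absurd ⟨m, Or.inr ⟨by have := hm.lt; omega, hm.lt_length⟩, Or.inr hm⟩ hunread
    obtain ⟨i, hi⟩ := hw.exists_matched_left (by omega) hd
    refine ⟨i, hi, ?_⟩
    by_contra! hle
    exact hunread ⟨i, Or.inl hle, Or.inl hi⟩
  · rintro ⟨i, hi, hik⟩ ⟨x, hx, hx' | hx'⟩
    · have := hi.left_unique hx'
      have := hi.lt
      omega
    · exact Bool.false_ne_true (hi.getD_right.symm.trans hx'.getD_left)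

/-- Matched pairs `(i, j)` whose tunnel has midpoint `(i + j + 1) / 2 > n + r`, where
`w.length = 2n`. -/
def rightTunnelPairs (r : ℕ) (w : List Bool) : Set (ℕ × ℕ) :=
  {q | Matched w q.1 q.2 ∧ w.length + 2 * r < q.1 + q.2 + 1}

lemma tunGt_eq_ncard_rightTunnelPairs (r : ℕ) (w : List Bool) :
    tunGt r w = (rightTunnelPairs r w).ncard := by
  have hinj : Set.InjOn Prod.fst (rightTunnelPairs r w) := fun q hq q' hq' h =>
    Prod.ext h (hq.1.right_unique (h ▸ hq'.1))
  rw [tunGt, ← hinj.ncard_image]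
  congr 1
  ext i
  simp only [rightTunnelPairs, Matched, Set.mem_image, Set.mem_ofPred_eq, Prod.exists,
    exists_and_right, exists_eq_right]
  constructor
  · rintro ⟨A, B, C, hB, hw, rfl, hlt⟩
    exact ⟨_, ⟨A, B, C, hB, hw, rfl, rfl⟩, by simp [hw]; omega⟩
  · rintro ⟨_, ⟨A, B, C, hB, hw, rfl, rfl⟩, hlt⟩
    exact ⟨A, B, C, hB, hw, rfl, by simp [hw] at hlt; omega⟩

-- A right tunnel with down-step at `j` is sent to the odd time at which `σ^{(r)}` reads `j`.
lemma evenRisesAfter_psiR_eq_ncard_rightTunnelPairs (r : ℕ) {w : List Bool} (hw : IsDyck w) :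
    evenRisesAfter r (psiR r w) = (rightTunnelPairs r w).ncard := by
  set time : ℕ × ℕ → ℕ := fun q => 2 * (w.length - q.2) + 2 * r - 1
  have hinj : Set.InjOn time (rightTunnelPairs r w) := fun q hq q' hq' h => by
    have hj : q.2 = q'.2 := by
      have := hq.1.lt_length
      have := hq'.1.lt_length
      simp only [time] at h
      omega
    exact Prod.ext (hq.1.left_unique (hj ▸ hq'.1)) hj
  rw [evenRisesAfter, ← hinj.ncard_image]
  congr 1
  ext p
  simp only [length_psiR, Set.mem_ofPred_eq, Set.mem_image, rightTunnelPairs, Prod.exists]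
  constructor
  · rintro ⟨hp, hodd, hrp, hu⟩
    obtain ⟨k, rfl⟩ : ∃ k, p = 2 * k + 1 := ⟨p / 2, by omega⟩
    obtain ⟨i, hi, hik⟩ := (psiR_getD_odd_eq_true_iff hw (by omega) hp).mp hu
    exact ⟨i, _, ⟨hi, by omega⟩, by simp only [time]; omega⟩
  · rintro ⟨i, j, ⟨hij, hlt⟩, rfl⟩
    have := hij.lt
    have := hij.lt_length
    obtain ⟨k, hk⟩ : ∃ k, k = w.length - 1 - j + r := ⟨_, rfl⟩
    have htime : time (i, j) = 2 * k + 1 := by simp only [time]; omega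
    rw [htime]
    refine ⟨by omega, by omega, by omega,
      (psiR_getD_odd_eq_true_iff hw (by omega) (by omega)).mpr ⟨i, ?_, by omega⟩⟩
    convert hij using 1
    omega

theorem tunGt_eq_evenRisesAfter_general (r : ℕ) (D : List Bool) (hD : IsDyck D) :
    tunGt r D = evenRisesAfter r (psiR r D) := by
  rw [tunGt_eq_ncard_rightTunnelPairs, evenRisesAfter_psiR_eq_ncard_rightTunnelPairs r hD]

/-- tunnels of `D ∈ D_n` with midpoint in `x > n + r` (i.e. `|A| > |C| + 2r`)
correspond in number to even rises of `D' = Ψ_r(D)` at 1-indexed even positions `> 2r`. -/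
theorem tunGt_eq_evenRisesAfter (r n : ℕ) (D : List Bool) (hD : IsDyck D)
    (hlen : D.length = 2 * n) :
    tunGt r D = evenRisesAfter r (psiR r D) :=
  tunGt_eq_evenRisesAfter_general r D hD

end DyckBij
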